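/- arXiv:2302.00945 — 2 statements merged into one kernel-verified Lean document; each statement's English description precedes it below -/
import Mathlib

section
/- Let T be the Gauss map. For every irrational x with 0 < x < 1/2 whose first partial quotient ⌊1/x⌋ is at least 2, one has T(x) = T(T(1 − x)). -/
noncomputable def gaussMap (t : ℝ) : ℝ := 1 / t - ⌊1 / t⌋

theorem gaussMap_eq_fract (t : ℝ) : gaussMap t = Int.fract (1 / t) := rfl

theorem gaussMap_div_one_sub (x : ℝ) : gaussMap (x / (1 - x)) = gaussMap x := by
  rcases eq_or_ne x 0 with rfl | hx
  · simp
  have h : 1 / (x / (1 - x)) = 1 / x - 1 := by field_simp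
  rw [gaussMap_eq_fract, h, Int.fract_sub_one, gaussMap_eq_fract]

theorem gaussMap_one_sub {x : ℝ} (h0 : 0 < x) (h1 : x < 1 / 2) :
    gaussMap (1 - x) = x / (1 - x) := by
  have hpos : 0 < 1 - x := by linarith
  have hfloor : ⌊1 / (1 - x)⌋ = 1 := by
    rw [Int.floor_eq_iff, le_div_iff₀ hpos, div_lt_iff₀ hpos]
    constructor <;> push_cast <;> linarith
  rw [gaussMap, hfloor]
  field_simp
  ring

theorem stmt_3_general (x : ℝ) (h0 : 0 < x) (h1 : x < 1 / 2) :
    gaussMap x = gaussMap (gaussMap (1 - x)) := by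
  rw [gaussMap_one_sub h0 h1, gaussMap_div_one_sub]

theorem stmt_3 (x : ℝ) (hx : Irrational x) (h0 : 0 < x) (h1 : x < 1 / 2)
    (ha : 2 ≤ ⌊1 / x⌋) :
    gaussMap x = gaussMap (gaussMap (1 - x)) :=
  stmt_3_general x h0 h1
end

section
/- Let x ∈ (0,1) be irrational, R_x the rotation by x on [0,1), A = [1 − x, 1), N(y) the first return time of y ∈ A to A, and T the Gauss map. Define τ : A → [0,1) by τ(y) = (1 − y)/x. Then for every y ∈ A, τ(R_x^{N(y)}(y)) = τ(y) + T(x) (mod 1); that is, τ conjugates the first return map of R_x on A to the rotation by T(x) on [0,1). -/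
theorem stmt_17 (x : ℝ) (hx : Irrational x) (h0 : 0 < x) (h1 : x < 1)
    (R : ℝ → ℝ) (hR : ∀ y, R y = Int.fract (y + x))
    (A : Set ℝ) (hA : A = Set.Ico (1 - x) 1)
    (N : ℝ → ℕ) (hN : ∀ y, N y = sInf {n : ℕ | 1 ≤ n ∧ R^[n] y ∈ A})
    (τ : ℝ → ℝ) (hτ : ∀ y, τ y = (1 - y) / x) :
    ∀ y ∈ A, ∃ m : ℤ, τ (R^[N y] y) = τ y + gaussMap x + m := by
  intro y hy
  rw [hA] at hy
  obtain ⟨hy1, hy2⟩ := hy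
  have hy0 : 0 ≤ y := by linarith
  -- iterate formula
  have hiter : ∀ n : ℕ, R^[n] y = Int.fract (y + n * x) := by
    intro n
    induction n with
    | zero => simp [Int.fract_eq_self.2 ⟨hy0, hy2⟩]
    | succ n ih =>
      rw [Function.iterate_succ_apply', ih, hR]
      have h : Int.fract (y + n * x) + x
          = (y + (n + 1 : ℕ) * x) - (⌊y + n * x⌋ : ℝ) := by
        rw [Int.fract]; push_cast; ring
      rw [h, Int.fract_sub_intCast]
  -- the set is nonempty
  have hSne : {n : ℕ | 1 ≤ n ∧ R^[n] y ∈ A}.Nonempty := by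
    have hex : ∃ n : ℕ, 2 - x ≤ y + n * x := by
      obtain ⟨n, hn⟩ := exists_nat_ge ((2 - x - y) / x)
      exact ⟨n, by rw [div_le_iff₀ h0] at hn; linarith⟩
    set n₀ := Nat.find hex with hn₀
    have hfind : 2 - x ≤ y + n₀ * x := Nat.find_spec hex
    have h1n : 1 ≤ n₀ := by
      rcases Nat.eq_zero_or_pos n₀ with h | h
      · exfalso; have := Nat.find_spec hex; rw [← hn₀, h] at this
        push_cast at this; linarith
      · exact h
    have hlt : y + n₀ * x < 2 := by
      have hprev := Nat.find_min hex (m := n₀ - 1) (by omega)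
      push_neg at hprev
      have hc : ((n₀ - 1 : ℕ) : ℝ) = (n₀ : ℝ) - 1 := by
        rw [Nat.cast_sub h1n]; norm_num
      rw [hc] at hprev; nlinarith
    refine ⟨n₀, h1n, ?_⟩
    rw [hiter, hA]
    have hfl : ⌊y + n₀ * x⌋ = 1 := by
      rw [Int.floor_eq_iff]
      constructor <;> [push_cast; push_cast] <;> linarith
    rw [Int.fract, hfl]
    push_cast
    constructor <;> linarith
  have hNmem := Nat.sInf_mem hSne
  rw [← hN] at hNmem
  obtain ⟨hN1, hNA⟩ := hNmem
  -- floor stays 1 up to the first return time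
  have hfloor : ∀ n : ℕ, 1 ≤ n → n ≤ N y → ⌊y + n * x⌋ = 1 := by
    intro n
    induction n with
    | zero => omega
    | succ n ih =>
      intro _ hle
      rcases Nat.eq_zero_or_pos n with h | hn1
      · subst h
        rw [Int.floor_eq_iff]
        push_cast
        constructor <;> linarith
      · have hnN : n < N y := by omega
        have hfl := ih hn1 (le_of_lt hnN)
        have hnot : n ∉ {n : ℕ | 1 ≤ n ∧ R^[n] y ∈ A} := by
          intro hmem
          have := Nat.sInf_le hmem
          rw [← hN] at this; omega
        have hfr : Int.fract (y + n * x) = y + n * x - 1 := by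
          rw [Int.fract, hfl]; push_cast; ring
        have hnotA : y + n * x - 1 < 1 - x := by
          by_contra hc
          push_neg at hc
          apply hnot
          refine ⟨hn1, ?_⟩
          rw [hiter, hA, hfr]
          have := Int.fract_lt_one (y + n * x)
          rw [hfr] at this
          exact ⟨hc, this⟩
        have hge : (1 : ℝ) ≤ y + n * x := by
          have := Int.floor_le (y + n * x)
          rw [hfl] at this; exact_mod_cast this
        rw [Int.floor_eq_iff]
        push_cast
        constructor <;> linarith
  have hflN := hfloor (N y) hN1 le_rfl
  have hfrN : Int.fract (y + (N y) * x) = y + (N y) * x - 1 := by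
    rw [Int.fract, hflN]; push_cast; ring
  refine ⟨⌊1 / x⌋ - (N y : ℤ), ?_⟩
  rw [hiter, hfrN, hτ, hτ, gaussMap]
  have hx' : x ≠ 0 := ne_of_gt h0
  push_cast
  field_simp
  ring
end
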